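/- arXiv:2302.04300 — 10 statements merged into one kernel-verified Lean document; each statement's English description precedes it below -/
import Mathlib

section
/- Let G be a finite group of even order q and let f : G → G be two-to-one. Then pres(f) ≤ ⌈2√q⌉ − 1, where √q is the real square root and ⌈·⌉ is the ceiling. -/
/-- The number of distinct values of `f`, i.e. `V(f) = #Im(f)`. -/
def imCard {G : Type*} [Fintype G] [DecidableEq G] (f : G → G) : ℕ :=
  (Finset.univ.image f).card

/-- The set of preimages of `b` under `f`. -/
def preim {G : Type*} [Fintype G] [DecidableEq G] (f : G → G) (b : G) : Finset G :=
  Finset.univ.filter (fun x => f x = b)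

/-- Permutation resemblance: `pres(f) = min{V(g) : g + f is a permutation of G}`. -/
noncomputable def pres {G : Type*} [AddGroup G] [Fintype G] [DecidableEq G] (f : G → G) : ℕ :=
  sInf {n | ∃ g : G → G, Function.Bijective (fun x => g x + f x) ∧ imCard g = n}

/-!
Let `I` be the image of `f`, so `#I = q/2 = #Iᶜ`, and let `c` pick one preimage of each `b ∈ I`.
For a bijection `σ : I → Iᶜ` written `σ b = d b + b`, the map sending `c b` to `b` and the other
preimage of `b` to `σ b` is a permutation `h`, and `h - f` takes only the values `0` and `d b`.
So it suffices to match `I` with `Iᶜ` using few "labels" `d b`. Among `u` unmatched points, some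
translate `s + ·` carries at least `u²/q` of them into the unmatched targets; matching these with
the single label `s` lowers `⌈q/u⌉` by at least one. Doing this until at most `m = ⌊√q⌋` points
are left and then spending one label per point uses at most `m + ⌈q/m⌉ - 2 ≤ ⌈2√q⌉ - 2` labels.
-/

namespace Nat

lemma mul_ceilDiv_lt {q u : ℕ} (hu : 0 < u) : u * (q ⌈/⌉ u) < q + u := by
  rw [ceilDiv_eq_add_pred_div]
  have := Nat.mul_div_le (q + u - 1) u
  omega

lemma ceilDiv_le_ceilDiv_of_le {q t u : ℕ} (ht : 0 < t) (htu : t ≤ u) : q ⌈/⌉ u ≤ q ⌈/⌉ t := by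
  rw [ceilDiv_le_iff_le_mul (ht.trans_le htu)]
  exact ((ceilDiv_le_iff_le_mul ht).1 le_rfl).trans (Nat.mul_le_mul_right _ htu)

lemma ceilDiv_add_one_le_ceilDiv_sub {q u o : ℕ} (hpos : 0 < u - o) (h : u * u ≤ o * q) :
    q ⌈/⌉ u + 1 ≤ q ⌈/⌉ (u - o) := by
  have hu : 0 < u := by omega
  set c := q ⌈/⌉ u
  have hqc : q ≤ u * c := (ceilDiv_le_iff_le_mul hu).1 le_rfl
  have hcq : u * c < q + u := mul_ceilDiv_lt hu
  have hoc : u ≤ o * c := by nlinarith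
  have hsplit : (u - o) * c + o * c = u * c := by rw [← add_mul, Nat.sub_add_cancel (by omega)]
  rw [Order.add_one_le_iff, ← not_le, ceilDiv_le_iff_le_mul hpos]
  omega

lemma sq_sqrt_add_ceilDiv_sqrt_sub_one_lt {q : ℕ} (hq : 0 < q) :
    (q.sqrt + q ⌈/⌉ q.sqrt - 1) ^ 2 < 4 * q := by
  set m := q.sqrt
  have hm : 0 < m := Nat.sqrt_pos.2 hq
  have hmq : m * m ≤ q := Nat.sqrt_le q
  have hqm : q < (m + 1) * (m + 1) := Nat.lt_succ_sqrt q
  set c := q ⌈/⌉ m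
  have hqc : q ≤ m * c := (ceilDiv_le_iff_le_mul hm).1 le_rfl
  have hcq : m * c < q + m := mul_ceilDiv_lt hm
  have hmc : m ≤ c := Nat.le_of_mul_le_mul_left (hmq.trans hqc) hm
  have hcm : c ≤ m + 2 := (ceilDiv_le_iff_le_mul hm).2 (by nlinarith)
  clear_value c
  obtain rfl | rfl | rfl : c = m ∨ c = m + 1 ∨ c = m + 2 := by omega
  · have : m + m - 1 + 1 = 2 * m := by omega
    nlinarith
  · rw [show m + (m + 1) - 1 = 2 * m by omega]
    nlinarith
  · rw [show m + (m + 2) - 1 = 2 * m + 1 by omega]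
    nlinarith

end Nat

-- Labels spent on `u` unmatched points: greedy translates while more than `t` are left, then one
-- label per point.
def greedyBound (q t u : ℕ) : ℕ := if u ≤ t then u else t + q ⌈/⌉ t - q ⌈/⌉ u

lemma greedyBound_sub_add_one_le {q t u o : ℕ} (ht : 0 < t) (ho : 0 < o) (hou : o ≤ u)
    (h : u * u ≤ o * q) : greedyBound q t (u - o) + 1 ≤ greedyBound q t u := by
  by_cases hu : u ≤ t
  · simp only [greedyBound, hu, if_true, show u - o ≤ t by omega]
    omega
  have hmono : q ⌈/⌉ u ≤ q ⌈/⌉ t := Nat.ceilDiv_le_ceilDiv_of_le ht (by omega)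
  simp only [greedyBound, hu, if_false]
  split_ifs with hu'
  · rcases hu'.lt_or_eq with hlt | heq
    · omega
    · have := Nat.ceilDiv_add_one_le_ceilDiv_sub (by omega) h
      rw [heq] at this
      omega
  · have := Nat.ceilDiv_add_one_le_ceilDiv_sub (by omega) h
    have := Nat.ceilDiv_le_ceilDiv_of_le (q := q) ht (by omega : t ≤ u - o)
    omega

lemma add_one_le_ceil_two_mul_sqrt {q k : ℕ} (h : k ^ 2 < 4 * q) :
    (k + 1 : ℤ) ≤ ⌈2 * √(q : ℝ)⌉ := by
  have hsqrt : √(4 * q : ℝ) = 2 * √(q : ℝ) := by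
    rw [Real.sqrt_mul (by norm_num), show (4 : ℝ) = 2 ^ 2 by norm_num, Real.sqrt_sq (by norm_num)]
  have hk : (k : ℝ) < 2 * √(q : ℝ) := by
    rw [← hsqrt, Real.lt_sqrt (by positivity)]
    exact_mod_cast h
  rw [Int.le_ceil_iff]
  push_cast
  linarith

lemma greedyBound_half_add_two_le {q n : ℕ} (hn : 0 < n) (hq : q = 2 * n) :
    (greedyBound q q.sqrt n + 2 : ℤ) ≤ ⌈2 * √(q : ℝ)⌉ := by
  have hmq : q.sqrt * q.sqrt ≤ q := Nat.sqrt_le q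
  unfold greedyBound
  split_ifs with hnm
  · have := add_one_le_ceil_two_mul_sqrt (q := q) (k := n + 1) (by nlinarith)
    push_cast at this ⊢
    linarith
  · have hq0 : 0 < q := by omega
    have hqn : q ⌈/⌉ n = 2 := by
      refine le_antisymm ((ceilDiv_le_iff_le_mul hn).2 (by omega)) ?_
      by_contra! hlt
      have := (ceilDiv_le_iff_le_mul hn).1 (Nat.le_of_lt_succ hlt)
      omega
    have hmono : q ⌈/⌉ n ≤ q ⌈/⌉ q.sqrt :=
      Nat.ceilDiv_le_ceilDiv_of_le (Nat.sqrt_pos.2 hq0) (by omega)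
    have := add_one_le_ceil_two_mul_sqrt (Nat.sq_sqrt_add_ceilDiv_sqrt_sub_one_lt hq0)
    omega

open Finset

theorem Set.BijOn.union_of_disjoint {α β : Type*} {f : α → β} {s₁ s₂ : Set α} {t₁ t₂ : Set β}
    (h₁ : Set.BijOn f s₁ t₁) (h₂ : Set.BijOn f s₂ t₂) (ht : Disjoint t₁ t₂) :
    Set.BijOn f (s₁ ∪ s₂) (t₁ ∪ t₂) := by
  refine h₁.union h₂ ?_
  rintro x (hx | hx) y (hy | hy) hxy
  · exact h₁.injOn hx hy hxy
  · exact (ht.ne_of_mem (h₁.mapsTo hx) (h₂.mapsTo hy) hxy).elim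
  · exact (ht.ne_of_mem (h₁.mapsTo hy) (h₂.mapsTo hx) hxy.symm).elim
  · exact h₂.injOn hx hy hxy

theorem card_eq_mul_card_image {G : Type*} [Fintype G] [DecidableEq G] {f : G → G} {k : ℕ}
    (hf : ∀ b ∈ univ.image f, #(preim f b) = k) :
    Fintype.card G = k * #(univ.image f) := by
  rw [← card_univ, card_eq_sum_card_image f univ]
  change ∑ b ∈ univ.image f, #(preim f b) = _
  rw [sum_congr rfl hf, sum_const, smul_eq_mul, mul_comm]

section AddGroup

variable {G : Type*} [AddGroup G] [Fintype G] [DecidableEq G]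

theorem sum_card_filter_add_mem (A B : Finset G) :
    ∑ s : G, #{a ∈ A | s + a ∈ B} = #A * #B := by
  simp_rw [card_filter]
  rw [sum_comm, ← smul_eq_mul, ← sum_const]
  refine sum_congr rfl fun a _ => ?_
  rw [Fintype.sum_equiv (Equiv.addRight a) (fun s => if s + a ∈ B then 1 else 0)
    (fun b => if b ∈ B then 1 else 0) fun _ => rfl]
  simp

theorem exists_card_mul_card_le_card_filter_add_mem (A B : Finset G) :
    ∃ s : G, #A * #B ≤ Fintype.card G * #{a ∈ A | s + a ∈ B} := by
  have hsum : ∑ _s : G, #A * #B ≤ ∑ s : G, Fintype.card G * #{a ∈ A | s + a ∈ B} := by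
    rw [sum_const, card_univ, smul_eq_mul, ← mul_sum, sum_card_filter_add_mem]
  obtain ⟨s, -, hs⟩ := exists_le_of_sum_le univ_nonempty hsum
  exact ⟨s, hs⟩

theorem exists_bijOn_add_card_image_le {t : ℕ} (ht : 0 < t) (A B : Finset G) (hAB : #A = #B) :
    ∃ d : G → G, Set.BijOn (fun a => d a + a) A B ∧
      #(A.image d) ≤ greedyBound (Fintype.card G) t #A := by
  induction hu : #A using Nat.strong_induction_on generalizing A B with
  | _ u ih =>
  obtain rfl | hA := A.eq_empty_or_nonempty
  · obtain rfl : B = ∅ := card_eq_zero.1 (hAB.symm.trans card_empty)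
    exact ⟨0, by simp, by simp⟩
  obtain ⟨s, hs⟩ := exists_card_mul_card_le_card_filter_add_mem A B
  rw [← hAB, hu] at hs
  set A₁ := {a ∈ A | s + a ∈ B}
  set B₁ := A₁.image (s + ·)
  have hA₁ : A₁ ⊆ A := filter_subset _ _
  have hle : #A₁ ≤ #A := card_le_card hA₁
  have hB₁ : B₁ ⊆ B := by
    simp only [B₁, A₁, image_subset_iff, mem_filter]
    exact fun a ha => ha.2
  have hcardB₁ : #B₁ = #A₁ := card_image_of_injective _ (add_right_injective s)
  have hcardA₁ : 0 < #A₁ := by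
    have hu₀ : 0 < u := hu ▸ hA.card_pos
    exact Nat.pos_of_mul_pos_left (hs.trans_lt' (Nat.mul_pos hu₀ hu₀))
  obtain ⟨d, hd, hcard⟩ := ih #(A \ A₁) (by rw [card_sdiff_of_subset hA₁]; omega) (A \ A₁)
    (B \ B₁) (by rw [card_sdiff_of_subset hA₁, card_sdiff_of_subset hB₁]; omega) rfl
  refine ⟨(A₁ : Set G).piecewise (fun _ => s) d, ?_, ?_⟩
  · have htranslate : Set.BijOn (s + ·) A₁ B₁ := by
      rw [coe_image]
      exact (add_right_injective s).injOn.bijOn_image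
    rw [← union_sdiff_of_subset hA₁, ← union_sdiff_of_subset hB₁, coe_union, coe_union]
    refine Set.BijOn.union_of_disjoint ?_ ?_ (disjoint_coe.2 disjoint_sdiff)
    · exact htranslate.congr fun a ha => by simp [Set.piecewise_eq_of_mem _ _ _ ha]
    · refine hd.congr fun a ha => ?_
      simp [Set.piecewise_eq_of_notMem _ _ _ (mem_sdiff.1 ha).2]
  · have himage :
        A.image ((A₁ : Set G).piecewise (fun _ => s) d) ⊆ insert s ((A \ A₁).image d) := by
      intro x hx
      obtain ⟨a, ha, rfl⟩ := mem_image.1 hx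
      by_cases ha₁ : a ∈ A₁
      · simp [Set.piecewise_eq_of_mem _ _ _ (mem_coe.2 ha₁)]
      · rw [Set.piecewise_eq_of_notMem _ _ _ (by simpa using ha₁)]
        exact mem_insert_of_mem (mem_image_of_mem d (mem_sdiff.2 ⟨ha, ha₁⟩))
    calc #(A.image _) ≤ #(insert s ((A \ A₁).image d)) := card_le_card himage
      _ ≤ #((A \ A₁).image d) + 1 := card_insert_le _ _
      _ ≤ greedyBound (Fintype.card G) t (u - #A₁) + 1 := by
        rw [card_sdiff_of_subset hA₁, hu] at hcard
        omega
      _ ≤ greedyBound (Fintype.card G) t u :=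
        greedyBound_sub_add_one_le ht hcardA₁ (hu ▸ hle) (by linarith)

theorem pres_le_imCard {f g : G → G} (hg : Function.Bijective fun x => g x + f x) :
    pres f ≤ imCard g :=
  Nat.sInf_le ⟨g, hg, rfl⟩

theorem pres_le_card_image_add_one {f d : G → G} (hf : ∀ b ∈ univ.image f, #(preim f b) ≤ 2)
    (hd : Set.BijOn (fun b => d b + b) ↑(univ.image f) (↑(univ.image f))ᶜ) :
    pres f ≤ #((univ.image f).image d) + 1 := by
  set c := Function.invFun f
  have hc : ∀ x, f (c (f x)) = f x := fun x => Function.invFun_eq ⟨x, rfl⟩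
  have hfI : ∀ x, f x ∈ univ.image f := fun x => mem_image_of_mem f (mem_univ x)
  set g : G → G := fun x => if c (f x) = x then 0 else d (f x)
  have hfiber : ∀ x y, f x = f y → c (f x) ≠ x → c (f x) ≠ y → x = y := by
    intro x y hxy hx hy
    by_contra hne
    have : 2 < #(preim f (f x)) :=
      two_lt_card.2 ⟨x, by simp [preim], y, by simp [preim, hxy], c (f x), by simp [preim, hc],
        hne, Ne.symm hx, Ne.symm hy⟩
    linarith [hf _ (hfI x)]
  have hinj : Function.Injective fun x => g x + f x := by
    intro x y hxy
    simp only [g] at hxy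
    split_ifs at hxy with hx hy hy
    · rw [zero_add, zero_add] at hxy
      rw [← hx, ← hy, hxy]
    · rw [zero_add] at hxy
      exact absurd (hxy ▸ hfI x) (hd.mapsTo (mem_coe.2 (hfI y)))
    · rw [zero_add] at hxy
      exact absurd (hxy ▸ hfI y) (hd.mapsTo (mem_coe.2 (hfI x)))
    · have hxy' : f x = f y := hd.injOn (mem_coe.2 (hfI x)) (mem_coe.2 (hfI y)) hxy
      exact hfiber x y hxy' hx (hxy' ▸ hy)
  have himage : univ.image g ⊆ insert 0 ((univ.image f).image d) := by
    intro z hz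
    obtain ⟨x, -, rfl⟩ := mem_image.1 hz
    simp only [g]
    split_ifs
    · exact mem_insert_self _ _
    · exact mem_insert_of_mem (mem_image_of_mem d (hfI x))
  calc pres f ≤ imCard g := pres_le_imCard (Finite.injective_iff_bijective.1 hinj)
    _ ≤ #(insert 0 ((univ.image f).image d)) := card_le_card himage
    _ ≤ #((univ.image f).image d) + 1 := card_insert_le _ _

end AddGroup

theorem pres_le_of_even_two_to_one_general {G : Type*} [AddGroup G] [Fintype G] [DecidableEq G]
    (f : G → G)
    (h2 : ∀ b ∈ Finset.univ.image f, (preim f b).card = 2) :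
    (pres f : ℤ) ≤ ⌈2 * Real.sqrt (Fintype.card G : ℝ)⌉ - 1 := by
  set I := univ.image f
  have hq : Fintype.card G = 2 * #I := card_eq_mul_card_image h2
  have hI : 0 < #I := (univ_nonempty.image f).card_pos
  obtain ⟨d, hd, hcard⟩ := exists_bijOn_add_card_image_le
    (t := (Fintype.card G).sqrt) (Nat.sqrt_pos.2 (by omega)) I Iᶜ (by rw [card_compl]; omega)
  have hpres : pres f ≤ #(I.image d) + 1 :=
    pres_le_card_image_add_one (fun b hb => (h2 b hb).le) (by rwa [coe_compl] at hd)
  have hbound := greedyBound_half_add_two_le hI hq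
  omega

/-- If `#G = q` is even and `f : G → G` is two-to-one, then
`pres(f) ≤ ⌈2√q⌉ − 1`. -/
theorem pres_le_of_even_two_to_one {G : Type*} [AddGroup G] [Fintype G] [DecidableEq G]
    (f : G → G) (hq : Even (Fintype.card G))
    (h2 : ∀ b ∈ Finset.univ.image f, (preim f b).card = 2) :
    (pres f : ℤ) ≤ ⌈2 * Real.sqrt (Fintype.card G : ℝ)⌉ - 1 :=
  pres_le_of_even_two_to_one_general f h2
end

section
/- Let q be an odd prime power and let f : F_q → F_q be the squaring map f(x) = x². Then pres(f) ≤ ⌈2√(q−1)⌉ − 1, where √(q−1) is the real square root and ⌈·⌉ is the ceiling. -/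
/-!
Choose one square root from each pair `±x` (and `0`), send it to its square, and send the other
root `x` to `ψ (x ^ 2)`, where `ψ` is a bijection from the nonzero squares onto the nonsquares.
This is a permutation `Φ`, and `Φ - x²` takes only the value `0` and the values `ψ s - s`, so it
suffices to build `ψ` from few translations. Greedily, the best translation matches at least
`n² / q` of the `n` remaining points. Starting from `n = (q - 1) / 2`, the first step leaves at
most `q / 4` points; after that every step raises `⌊q / n⌋` by one until at most `a = ⌊√q⌋`
points remain, so `Φ - x²` takes at most `a + ⌈q / a⌉ - 2 < 2 √(q - 1)` values.
-/

open Finset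
open Set (BijOn InjOn range)

section Matching

variable {G : Type*} [AddGroup G]

/-- `ψ` is a translation on each fibre of `v ↦ ψ v - v`, so `D` bounds the number of pieces. -/
def MatchesByTranslations (V U : Finset G) (k : ℕ) : Prop :=
  ∃ ψ : G → G, ∃ D : Finset G, BijOn ψ V U ∧ #D ≤ k ∧ ∀ v ∈ V, ψ v - v ∈ D

namespace MatchesByTranslations

theorem mono {V U : Finset G} {k k' : ℕ} (h : MatchesByTranslations V U k) (hk : k ≤ k') :
    MatchesByTranslations V U k' :=
  let ⟨ψ, D, hψ, hD, hψD⟩ := h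
  ⟨ψ, D, hψ, hD.trans hk, hψD⟩

theorem min {V U : Finset G} {k₁ k₂ : ℕ} (h₁ : MatchesByTranslations V U k₁)
    (h₂ : MatchesByTranslations V U k₂) : MatchesByTranslations V U (min k₁ k₂) := by
  rcases le_total k₁ k₂ with hk | hk
  · rwa [min_eq_left hk]
  · rwa [min_eq_right hk]

theorem empty : MatchesByTranslations (∅ : Finset G) ∅ 0 :=
  ⟨id, ∅, by simp, by simp, by simp⟩

variable [DecidableEq G]

theorem translate (W : Finset G) (c : G) :
    MatchesByTranslations W (W.image (c + ·)) 1 :=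
  ⟨(c + ·), {c}, by simpa using (add_right_injective c).injOn.bijOn_image, by simp,
    fun v _ => by simp⟩

theorem union {V₁ V₂ U₁ U₂ : Finset G} {k₁ k₂ : ℕ} (h₁ : MatchesByTranslations V₁ U₁ k₁)
    (h₂ : MatchesByTranslations V₂ U₂ k₂) (hV : Disjoint V₁ V₂) (hU : Disjoint U₁ U₂) :
    MatchesByTranslations (V₁ ∪ V₂) (U₁ ∪ U₂) (k₁ + k₂) := by
  obtain ⟨ψ₁, D₁, hψ₁, hD₁, hψD₁⟩ := h₁
  obtain ⟨ψ₂, D₂, hψ₂, hD₂, hψD₂⟩ := h₂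
  set ψ := fun x => if x ∈ V₁ then ψ₁ x else ψ₂ x
  have hψ₁' : BijOn ψ V₁ U₁ := hψ₁.congr fun x hx => by simp_all [ψ]
  have hψ₂' : BijOn ψ V₂ U₂ :=
    hψ₂.congr fun x hx => by simp [ψ, disjoint_right.1 hV (Finset.mem_coe.1 hx)]
  refine ⟨ψ, D₁ ∪ D₂, ?_, (card_union_le _ _).trans (add_le_add hD₁ hD₂), ?_⟩
  · have hinj : InjOn ψ (↑V₁ ∪ ↑V₂) := (Set.injOn_union (by simpa using hV)).2
      ⟨hψ₁'.injOn, hψ₂'.injOn, fun x hx y hy hxy =>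
        disjoint_left.1 hU (hψ₁'.mapsTo hx) (hxy ▸ hψ₂'.mapsTo hy)⟩
    simpa using hψ₁'.union hψ₂' hinj
  · intro x hx
    by_cases hx₁ : x ∈ V₁
    · simpa [ψ, hx₁] using Finset.mem_union_left _ (hψD₁ x hx₁)
    · have hx₂ : x ∈ V₂ := (Finset.mem_union.1 hx).resolve_left hx₁
      simpa [ψ, hx₁] using Finset.mem_union_right _ (hψD₂ x hx₂)

end MatchesByTranslations

variable [DecidableEq G] [Fintype G]

theorem exists_card_mul_card_le_card_mul_card_filter (V U : Finset G) :
    ∃ c, #V * #U ≤ Fintype.card G * #{v ∈ V | c + v ∈ U} := by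
  have hsum : ∑ c : G, #{v ∈ V | c + v ∈ U} = #V * #U := by
    have hrow : ∀ v : G, ∑ c : G, (if c + v ∈ U then 1 else 0) = #U := fun v => by
      rw [Fintype.sum_equiv (Equiv.addRight v) (fun c => if c + v ∈ U then 1 else 0)
        (fun u => if u ∈ U then 1 else 0) fun _ => rfl]
      simp
    simp_rw [card_filter]
    rw [Finset.sum_comm, Finset.sum_congr rfl fun v _ => hrow v, sum_const, smul_eq_mul]
  obtain ⟨c, -, hc⟩ := exists_le_of_sum_le (s := Finset.univ) univ_nonempty
    (f := fun _ => #V * #U) (g := fun c => Fintype.card G * #{v ∈ V | c + v ∈ U})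
    (by rw [sum_const, card_univ, smul_eq_mul, ← mul_sum, hsum, mul_comm])
  exact ⟨c, hc⟩

theorem MatchesByTranslations.exists_reduction {V U : Finset G} (h : #V = #U) :
    ∃ V' U' : Finset G, #V' = #U' ∧ Fintype.card G * #V' + #V * #V ≤ Fintype.card G * #V ∧
      ∀ k, MatchesByTranslations V' U' k → MatchesByTranslations V U (k + 1) := by
  obtain ⟨c, hc⟩ := exists_card_mul_card_le_card_mul_card_filter V U
  set W := {v ∈ V | c + v ∈ U}
  have hWV : W ⊆ V := filter_subset _ _
  have hWU : W.image (c + ·) ⊆ U := by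
    intro u hu
    obtain ⟨v, hv, rfl⟩ := Finset.mem_image.1 hu
    exact (Finset.mem_filter.1 hv).2
  have hWc : #(W.image (c + ·)) = #W := card_image_of_injective _ (add_right_injective c)
  refine ⟨V \ W, U \ W.image (c + ·), ?_, ?_, fun k hk => ?_⟩
  · rw [card_sdiff_of_subset hWV, card_sdiff_of_subset hWU, hWc, h]
  · rw [← h] at hc
    rw [card_sdiff_of_subset hWV, Nat.mul_sub]
    have := Nat.mul_le_mul_left (Fintype.card G) (card_le_card hWV)
    omega
  · rw [← Finset.union_sdiff_of_subset hWV, ← Finset.union_sdiff_of_subset hWU, add_comm]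
    exact (translate W c).union hk disjoint_sdiff disjoint_sdiff

theorem MatchesByTranslations.of_card_eq {V U : Finset G} (h : #V = #U) :
    MatchesByTranslations V U #V := by
  induction hn : #V using Nat.strong_induction_on generalizing V U with
  | _ n ih =>
  rcases Nat.eq_zero_or_pos n with rfl | hn0
  · rw [card_eq_zero.1 hn, card_eq_zero.1 (h ▸ hn : #U = 0)]
    exact empty
  obtain ⟨V', U', h', hV', hext⟩ := exists_reduction h
  have hlt : #V' < n := by subst hn; nlinarith
  exact (hext _ (ih _ hlt h' rfl)).mono (by omega)

/-- `b` is a lower bound for `|G| / #V`: each greedy step raises it by one, and it stays below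
`A` as long as more than `s` points remain; the last `s` points cost one translation each. -/
theorem MatchesByTranslations.of_mul_card_le {s A : ℕ} (hs : 0 < s)
    (hA : Fintype.card G ≤ s * A) {b : ℕ} {V U : Finset G} (h : #V = #U)
    (hb : b * #V ≤ Fintype.card G) : MatchesByTranslations V U (s + (A - b)) := by
  induction hn : #V using Nat.strong_induction_on generalizing b V U with
  | _ n ih =>
  rcases le_or_gt n s with hns | hsn
  · exact (hn ▸ of_card_eq h).mono (by omega)
  obtain ⟨V', U', h', hV', hext⟩ := exists_reduction h
  subst hn
  have hq : 0 < Fintype.card G := Fintype.card_pos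
  have hA0 : 0 < A := Nat.pos_of_ne_zero fun hA0 => by rw [hA0, mul_zero] at hA; omega
  have hbA : b < A := by
    by_contra! hAb
    nlinarith [Nat.mul_lt_mul_of_pos_right hsn (hA0.trans_le hAb)]
  have hlt : #V' < #V := by nlinarith
  have hb' : (b + 1) * #V' ≤ Fintype.card G := by
    have hnq : #V ≤ Fintype.card G := by nlinarith
    refine Nat.le_of_mul_le_mul_left ?_ hq
    zify [hnq] at hV' hb ⊢
    nlinarith [mul_le_mul_of_nonneg_left hV' (by positivity : (0 : ℤ) ≤ b + 1),
      mul_le_mul_of_nonneg_right hb (sub_nonneg.2 (by exact_mod_cast hnq) :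
        (0 : ℤ) ≤ Fintype.card G - #V)]
  exact (hext _ (ih _ hlt h' hb' rfl)).mono (by omega)

end Matching

theorem sq_two_add_min_lt {q n : ℕ} (hq : 3 ≤ q) (hn : 4 * n ≤ q) :
    (2 + min n (q.sqrt + (q ⌈/⌉ q.sqrt - 4))) ^ 2 < 4 * (q - 1) := by
  rcases le_or_gt q 9 with hq9 | hq9
  · -- here the bound through `√q` is too weak, but only `n ≤ 2` points remain
    have : n ≤ 2 := by omega
    calc _ ≤ (2 + n) ^ 2 := by gcongr; exact min_le_left _ _
      _ < 4 * (q - 1) := by interval_cases n <;> omega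
  set a := q.sqrt
  set c := q ⌈/⌉ a
  have ha : a * a ≤ q := Nat.sqrt_le q
  have ha' : q < (a + 1) * (a + 1) := Nat.lt_succ_sqrt q
  have ha3 : 3 ≤ a := Nat.le_sqrt.2 (by omega)
  have hc : q ≤ a * c := (ceilDiv_le_iff_le_mul (by omega)).1 le_rfl
  have hc0 : 0 < c := Nat.pos_of_ne_zero fun hc0 => by rw [hc0, mul_zero] at hc; omega
  have hc' : a * (c - 1) < q := by
    by_contra! h
    have := (ceilDiv_le_iff_le_mul (by omega)).2 h
    omega
  have hac : a ≤ c := by nlinarith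
  have hca : c ≤ a + 2 := by
    by_contra! h
    nlinarith [Nat.mul_le_mul_left a (show a + 2 ≤ c - 1 by omega)]
  have hc4 : 4 ≤ c := by
    by_contra! h
    have : a * c ≤ 3 * 3 := Nat.mul_le_mul (by omega) (by omega)
    omega
  calc _ ≤ (a + c - 2) ^ 2 := by gcongr; omega
    _ < 4 * (q - 1) := by
      zify [show 2 ≤ a + c by omega, show 1 ≤ q by omega, show 1 ≤ c by omega] at hc' ⊢
      nlinarith

theorem natCast_le_ceil_two_mul_sqrt_sub_one {m q : ℕ} (h : m ^ 2 < 4 * (q - 1)) :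
    (m : ℤ) ≤ ⌈2 * √((q : ℝ) - 1)⌉ - 1 := by
  have hq : 1 ≤ q := Nat.pos_of_ne_zero fun hq => by simp [hq] at h
  rw [le_sub_iff_add_le, Int.add_one_le_iff, Int.lt_ceil, Int.cast_natCast]
  refine lt_of_pow_lt_pow_left₀ 2 (by positivity) ?_
  have h' : ((m ^ 2 : ℕ) : ℝ) < ((4 * (q - 1) : ℕ) : ℝ) := by exact_mod_cast h
  rw [mul_pow, Real.sq_sqrt (by simpa using hq)]
  push_cast [hq] at h'
  linarith

theorem exists_bijOn_range_and_bijOn_compl {G β : Type*} [AddGroup G] {f : G → β}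
    (hf : ∀ x y, f x = f y ↔ x = y ∨ x = -y) (hG : ∀ x : G, -x = x → x = 0) :
    ∃ A : Set G, BijOn f A (range f) ∧ BijOn f Aᶜ (range f \ {f 0}) := by
  obtain ⟨A, -, hA⟩ := Set.exists_subset_bijOn Set.univ f
  rw [Set.image_univ] at hA
  have hsec : ∀ x, x ∈ A ∨ -x ∈ A := fun x => by
    obtain ⟨a, ha, hax⟩ := hA.surjOn (Set.mem_range_self x)
    rcases (hf a x).1 hax with rfl | rfl
    exacts [Or.inl ha, Or.inr ha]
  have h0 : (0 : G) ∈ A := by simpa using hsec 0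
  refine ⟨A, hA, ⟨fun x hx => ⟨Set.mem_range_self x, fun hx0 => ?_⟩, fun x hx y hy hxy => ?_, ?_⟩⟩
  · rcases (hf x 0).1 hx0 with rfl | rfl
    exacts [hx h0, hx (by simpa using h0)]
  · rcases (hf x y).1 hxy with h | rfl
    exacts [h, (hx ((hsec y).resolve_left hy)).elim]
  · rintro _ ⟨⟨x, rfl⟩, hx0⟩
    obtain ⟨a, ha, hax⟩ := hA.surjOn (Set.mem_range_self x)
    have hfa : f (-a) = f a := (hf _ _).2 (Or.inr rfl)
    refine ⟨-a, fun hna => hx0 ?_, hfa.trans hax⟩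
    rw [Set.mem_singleton_iff, ← hax, hG a (hA.injOn hna ha hfa)]

theorem pres_le_card_add_one {G : Type*} [AddGroup G] [Fintype G] [DecidableEq G]
    {f σ : G → G} {A : Set G} {D : Finset G} (hf : InjOn f A) (hσ : InjOn σ Aᶜ)
    (hσf : Set.MapsTo σ Aᶜ (range f)ᶜ) (hD : ∀ x ∉ A, σ x - f x ∈ D) : pres f ≤ #D + 1 := by
  classical
  set Φ := A.piecewise f σ
  have hΦ : Function.Bijective Φ := Finite.injective_iff_bijective.1 <|
    (Set.injective_piecewise_iff A).2 ⟨hf, hσ, fun x _ y hy hxy => hσf hy ⟨x, hxy⟩⟩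
  calc pres f ≤ imCard (Φ - f) := Nat.sInf_le ⟨Φ - f, by simpa using hΦ, rfl⟩
    _ ≤ #(insert 0 D) := card_le_card fun _ hz => by
      obtain ⟨x, -, rfl⟩ := Finset.mem_image.1 hz
      by_cases hx : x ∈ A
      · simp [Φ, hx]
      · simp [Φ, hx, hD x hx]
    _ ≤ #D + 1 := card_insert_le _ _

theorem sq_pres_lt_four_mul_card_sub_one {G : Type*} [AddGroup G] [Fintype G] [DecidableEq G]
    [Nontrivial G] {f : G → G} (hf : ∀ x y, f x = f y ↔ x = y ∨ x = -y)
    (hG : ∀ x : G, -x = x → x = 0) : pres f ^ 2 < 4 * (Fintype.card G - 1) := by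
  obtain ⟨A, hA, hAc⟩ := exists_bijOn_range_and_bijOn_compl hf hG
  set R := univ.image f
  have hR : range f = R := by simp [R]
  rw [hR, ← Finset.coe_singleton, ← Finset.coe_sdiff] at hAc
  rw [hR] at hA
  set S := R \ {f 0}
  have hRS : #R = #S + 1 := by
    rw [card_sdiff_of_subset (by simp [R]), card_singleton]
    exact (Nat.sub_add_cancel (card_pos.2 ⟨f 0, by simp [R]⟩)).symm
  have hq : #R + #S = Fintype.card G := by
    rw [← Set.ncard_coe_finset R, ← hA.ncard_eq, ← Set.ncard_coe_finset S, ← hAc.ncard_eq,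
      Set.ncard_add_ncard_compl, Nat.card_eq_fintype_card]
  have hq3 : 3 ≤ Fintype.card G := by have := Fintype.one_lt_card (α := G); omega
  have hSU : #S = #Rᶜ := by rw [card_compl]; omega
  obtain ⟨S', U', h', hS', hext⟩ := MatchesByTranslations.exists_reduction hSU
  have h4 : 4 * #S' ≤ Fintype.card G := by nlinarith
  set a := (Fintype.card G).sqrt
  have ha : 0 < a := Nat.sqrt_pos.2 Fintype.card_pos
  obtain ⟨ψ, D, hψ, hD, hψD⟩ := hext _ <| .min (.of_card_eq h')
    (.of_mul_card_le ha ((ceilDiv_le_iff_le_mul ha).1 le_rfl) h' h4)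
  have hpres : pres f ≤ #D + 1 := pres_le_card_add_one (σ := ψ ∘ f) hA.injOn
    (hψ.injOn.comp hAc.injOn hAc.mapsTo)
    (by rw [hR, ← Finset.coe_compl]; exact hψ.mapsTo.comp hAc.mapsTo)
    fun x hx => hψD _ (hAc.mapsTo hx)
  calc pres f ^ 2 ≤ (2 + min #S' (a + (Fintype.card G ⌈/⌉ a - 4))) ^ 2 := by gcongr; omega
    _ < 4 * (Fintype.card G - 1) := sq_two_add_min_lt hq3 h4

/-- For the squaring map over a finite field of odd order `q`,
`pres(x²) ≤ ⌈2√(q−1)⌉ − 1`. -/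
theorem pres_sq_le {F : Type*} [Field F] [Fintype F] [DecidableEq F]
    (hq : Odd (Fintype.card F)) :
    (pres (fun x : F => x ^ 2) : ℤ) ≤ ⌈2 * Real.sqrt ((Fintype.card F : ℝ) - 1)⌉ - 1 := by
  have h2 : (2 : F) ≠ 0 := Ring.two_ne_zero fun h => by
    simpa [Nat.odd_iff.1 hq] using FiniteField.even_card_of_char_two h
  have hneg : ∀ x : F, -x = x → x = 0 := fun x hx =>
    mul_left_cancel₀ h2 (by linear_combination -hx)
  exact natCast_le_ceil_two_mul_sqrt_sub_one <|
    sq_pres_lt_four_mul_card_sub_one (fun _ _ => sq_eq_sq_iff_eq_or_eq_neg) hneg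
end

section
/- Let G be a finite group, f : G → G, and let S be a k-subset of G with k ≥ u(f). Then the number of functions g : G → G such that (a) Im(g) = S and (b) g(x) ≠ g(y) whenever x ≠ y and f(x) = f(y), equals the number of admissible subtables of M_f with value set S multiplied by ∏_{t=1}^{u(f)} (t!)^{#P_t}, where P_t := {b ∈ G : #preim(f,b) = t}. -/
/-- The uniformity `u(f) = max_{b ∈ G} #preim(f,b)`. -/
def unif {G : Type*} [Fintype G] [DecidableEq G] (f : G → G) : ℕ :=
  Finset.univ.sup (fun b => (preim f b).card)

/-- `P_t = {b ∈ G : #preim(f,b) = t}`. -/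
def Pset {G : Type*} [Fintype G] [DecidableEq G] (f : G → G) (t : ℕ) : Finset G :=
  Finset.univ.filter (fun b => (preim f b).card = t)

/-- `A` is an admissible subtable of the subtraction table `M_f` with value set `S`:
the positions of `A` lie in `G × Im(f)`, the entry at position `(r,c)` is `r - c`,
(A1) `S` is the set of values of the entries of `A`, and
(A2) every column `c ∈ Im(f)` contains exactly `#preim(f,c)` positions of `A`. -/
def IsAdmissible {G : Type*} [AddGroup G] [Fintype G] [DecidableEq G]
    (f : G → G) (A : Finset (G × G)) (S : Finset G) : Prop :=
  (∀ p ∈ A, p.2 ∈ Finset.univ.image f) ∧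
  S = A.image (fun p => p.1 - p.2) ∧
  ∀ c ∈ Finset.univ.image f, (A.filter (fun p => p.2 = c)).card = (preim f c).card

/-!
A function `g` that is injective on the fibers of `f` is recorded by the positions
`(g x + f x, f x)` of `M_f`, whose entries are exactly the values `g x`; these positions form an
admissible subtable with value set `Im(g)`. Conversely, shifting by the column index turns the
functions `g` with a prescribed admissible subtable `A` into families of bijections from each
fiber `preim(f,c)` onto the `#preim(f,c)` rows that `A` occupies in column `c`. Hence every fiber
of `g ↦ subtable` has `∏_c #preim(f,c)!` elements, which regroups by fiber size into
`∏_t (t!)^{#P_t}`.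
-/

open Finset Function

def FiberInjective {α β γ : Type*} (f : α → β) (g : α → γ) : Prop :=
  ∀ x y : α, x ≠ y → f x = f y → g x ≠ g y

theorem FiberInjective.injective_position {α G : Type*} [Add G] [IsRightCancelAdd G]
    {f g : α → G} (hg : FiberInjective f g) : Injective fun x => (g x + f x, f x) := by
  intro x y hxy
  simp only [Prod.mk.injEq] at hxy
  by_contra hne
  exact hg x y hne hxy.2 (add_right_cancel (hxy.2 ▸ hxy.1))

theorem Fintype.card_injective_mapsTo {α β : Type*} [Fintype α] [DecidableEq α] [Fintype β]
    [DecidableEq β] (s : Finset β) :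
    card {φ : α → β // Injective φ ∧ ∀ x, φ x ∈ s} = (#s).descFactorial (card α) := by
  let e : {φ : α → β // Injective φ ∧ ∀ x, φ x ∈ s} ≃ (α ↪ s) :=
    { toFun φ := ⟨fun x => ⟨φ.1 x, φ.2.2 x⟩, fun x y h => φ.2.1 (congrArg Subtype.val h)⟩
      invFun φ := ⟨fun x => φ x, Subtype.val_injective.comp φ.injective, fun x => (φ x).2⟩ }
  rw [card_congr e, card_embedding_eq, card_coe]

def column {α β : Type*} [DecidableEq α] [DecidableEq β] (A : Finset (α × β)) (c : β) :
    Finset α :=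
  {p ∈ A | p.2 = c}.image Prod.fst

theorem mem_column {α β : Type*} [DecidableEq α] [DecidableEq β] {A : Finset (α × β)}
    {c : β} {r : α} : r ∈ column A c ↔ (r, c) ∈ A := by
  simp [column]

def fiberShift {α G : Type*} [AddGroup G] (f : α → G) :
    (α → G) ≃ ∀ c : G, {x // f x = c} → G :=
  ((Equiv.sigmaFiberEquiv f).symm.arrowCongr (Equiv.refl G)).trans <|
    (Equiv.piCurry fun _ _ => G).trans <|
      Equiv.piCongrRight fun c => (Equiv.refl _).arrowCongr (Equiv.addRight c)

theorem fiberShift_apply {α G : Type*} [AddGroup G] (f g : α → G) (c : G)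
    (x : {x // f x = c}) :
    fiberShift f g c x = g x + c :=
  rfl

theorem fiberInjective_and_mapsTo_iff {α G : Type*} [AddGroup G] [DecidableEq G]
    (f g : α → G) (A : Finset (G × G)) :
    (FiberInjective f g ∧ ∀ x, (g x + f x, f x) ∈ A) ↔
      ∀ c, Injective (fiberShift f g c) ∧ ∀ x, fiberShift f g c x ∈ column A c := by
  simp only [fiberShift_apply, mem_column, forall_and]
  refine and_congr ⟨fun hg c x y hxy => ?_, fun hg x y hne hf hgxy => ?_⟩
    ⟨fun h _ ⟨x, hx⟩ => hx ▸ h x, fun h x => h (f x) ⟨x, rfl⟩⟩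
  · by_contra hne
    exact hg x y (Subtype.coe_ne_coe.2 hne) (x.2.trans y.2.symm) (add_right_cancel hxy)
  · have := @hg (f x) ⟨x, rfl⟩ ⟨y, hf.symm⟩ (congrArg (· + f x) hgxy)
    exact hne (congrArg Subtype.val this)

section Preimages

variable {G : Type*} [Fintype G] [DecidableEq G]

theorem mem_preim {f : G → G} {b x : G} : x ∈ preim f b ↔ f x = b := by
  simp [preim]

theorem prod_factorial_card_preim (f : G → G) :
    ∏ c, (#(preim f c)).factorial = ∏ t ∈ Icc 1 (unif f), t.factorial ^ #(Pset f t) := by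
  have hmaps : ∀ c ∈ (univ : Finset G), #(preim f c) ∈ Icc 0 (unif f) := fun c _ =>
    mem_Icc.2 ⟨Nat.zero_le _, le_sup (f := fun b => #(preim f b)) (mem_univ c)⟩
  have hconst : ∀ t, ∏ c ∈ univ with #(preim f c) = t, (#(preim f c)).factorial =
      t.factorial ^ #(Pset f t) := fun t => by
    rw [prod_congr rfl fun c hc => congrArg Nat.factorial (mem_filter.1 hc).2, prod_const]
    rfl
  rw [← prod_fiberwise_of_maps_to hmaps, ← insert_Icc_add_one_left_eq_Icc (Nat.zero_le _),
    prod_insert (by simp)]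
  simp only [hconst, Nat.factorial_zero, one_pow, one_mul, zero_add]

end Preimages

section Subtables

variable {G : Type*} [AddGroup G] [Fintype G] [DecidableEq G]

def subtableOf (f g : G → G) : Finset (G × G) :=
  univ.image fun x => (g x + f x, f x)

theorem image_sub_subtableOf (f g : G → G) :
    (subtableOf f g).image (fun p => p.1 - p.2) = univ.image g := by
  simp [subtableOf, image_image, comp_def]

theorem card_filter_subtableOf {f g : G → G} (hg : FiberInjective f g) (c : G) :
    #{p ∈ subtableOf f g | p.2 = c} = #(preim f c) := by
  rw [subtableOf, filter_image, card_image_of_injective _ hg.injective_position]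
  rfl

theorem isAdmissible_subtableOf_iff {f g : G → G} {S : Finset G} (hg : FiberInjective f g) :
    IsAdmissible f (subtableOf f g) S ↔ univ.image g = S := by
  simp only [IsAdmissible, image_sub_subtableOf, card_filter_subtableOf hg, implies_true,
    and_true, eq_comm (a := S)]
  refine and_iff_right_of_imp fun _ p hp => ?_
  obtain ⟨x, -, rfl⟩ := mem_image.1 hp
  exact mem_image_of_mem f (mem_univ x)

namespace IsAdmissible

variable {f : G → G} {A : Finset (G × G)} {S : Finset G}

theorem card_eq (hA : IsAdmissible f A S) : #A = Fintype.card G := by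
  rw [card_eq_sum_card_fiberwise hA.1, sum_congr rfl hA.2.2, ← card_univ,
    card_eq_sum_card_fiberwise fun x _ => mem_image_of_mem f (mem_univ x)]
  rfl

theorem card_column (hA : IsAdmissible f A S) (c : G) : #(column A c) = #(preim f c) := by
  by_cases hc : c ∈ univ.image f
  · rw [column, card_image_of_injOn fun p hp q hq hpq => Prod.ext hpq <|
      (mem_filter.1 hp).2.trans (mem_filter.1 hq).2.symm, hA.2.2 c hc]
  · have hcol : column A c = ∅ := eq_empty_of_forall_notMem fun r hr =>
      hc (hA.1 _ (mem_column.1 hr))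
    have hpre : preim f c = ∅ := eq_empty_of_forall_notMem fun x hx =>
      hc (mem_preim.1 hx ▸ mem_image_of_mem f (mem_univ x))
    rw [hcol, hpre]

theorem subtableOf_eq_iff {g : G → G} (hA : IsAdmissible f A S) (hg : FiberInjective f g) :
    subtableOf f g = A ↔ ∀ x, (g x + f x, f x) ∈ A := by
  refine ⟨fun h x => h ▸ mem_image_of_mem _ (mem_univ x), fun h => ?_⟩
  refine eq_of_subset_of_card_le (image_subset_iff.2 fun x _ => h x) ?_
  rw [hA.card_eq, subtableOf, card_image_of_injective _ hg.injective_position, card_univ]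

theorem image_eq_and_subtableOf_eq_iff {g : G → G} (hA : IsAdmissible f A S) :
    ((univ.image g = S ∧ FiberInjective f g) ∧ subtableOf f g = A) ↔
      FiberInjective f g ∧ ∀ x, (g x + f x, f x) ∈ A := by
  refine ⟨fun ⟨⟨_, hg⟩, h⟩ => ⟨hg, (hA.subtableOf_eq_iff hg).1 h⟩, fun ⟨hg, h⟩ => ?_⟩
  have htab := (hA.subtableOf_eq_iff hg).2 h
  exact ⟨⟨(isAdmissible_subtableOf_iff hg).1 (htab ▸ hA), hg⟩, htab⟩

theorem card_fiberInjective_mapsTo (hA : IsAdmissible f A S) :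
    Nat.card {g // FiberInjective f g ∧ ∀ x, (g x + f x, f x) ∈ A} =
      ∏ c, (#(preim f c)).factorial := by
  rw [Nat.card_congr <| (fiberShift f).subtypeEquiv (q := fun F => ∀ c, Injective (F c) ∧
      ∀ x, F c x ∈ column A c) fun g => fiberInjective_and_mapsTo_iff f g A,
    Nat.card_congr <| Equiv.subtypePiEquivPi (p := fun c φ => Injective φ ∧
      ∀ x, φ x ∈ column A c), Nat.card_pi]
  refine prod_congr rfl fun c _ => ?_
  rw [Nat.card_eq_fintype_card, Fintype.card_injective_mapsTo, hA.card_column,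
    Fintype.card_subtype]
  exact Nat.descFactorial_self _

end IsAdmissible

end Subtables

theorem card_functions_eq_card_admissible_mul_general {G : Type*} [AddGroup G] [Fintype G]
    [DecidableEq G] (f : G → G) (S : Finset G) :
    {g : G → G | Finset.univ.image g = S ∧
        ∀ x y : G, x ≠ y → f x = f y → g x ≠ g y}.ncard =
      {A : Finset (G × G) | IsAdmissible f A S}.ncard *
        ∏ t ∈ Finset.Icc 1 (unif f), (Nat.factorial t) ^ (Pset f t).card := by
  change {g | univ.image g = S ∧ FiberInjective f g}.ncard = _
  classical
  set T : Finset (G → G) := {g | univ.image g = S ∧ FiberInjective f g}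
  set 𝒜 : Finset (Finset (G × G)) := {A | IsAdmissible f A S}
  have hmaps : ∀ g ∈ T, subtableOf f g ∈ 𝒜 := fun g hg => by
    obtain ⟨hS, hg⟩ := (mem_filter.1 hg).2
    exact mem_filter.2 ⟨mem_univ _, (isAdmissible_subtableOf_iff hg).2 hS⟩
  have hfiber : ∀ A ∈ 𝒜, #{g ∈ T | subtableOf f g = A} = ∏ c, (#(preim f c)).factorial :=
    fun A hA => by
      have hA := (mem_filter.1 hA).2
      rw [filter_filter, filter_congr fun g _ => hA.image_eq_and_subtableOf_eq_iff,
        ← Fintype.card_subtype, ← Nat.card_eq_fintype_card, hA.card_fiberInjective_mapsTo]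
  rw [← coe_filter_univ, ← coe_filter_univ, Set.ncard_coe_finset, Set.ncard_coe_finset,
    card_eq_sum_card_fiberwise hmaps, sum_congr rfl hfiber, sum_const, smul_eq_mul,
    prod_factorial_card_preim]

/-- The number of functions `g : G → G` with `Im(g) = S` which are injective on each
fiber of `f` equals the number of admissible subtables of `M_f` with value set `S`
multiplied by `∏_{t=1}^{u(f)} (t!)^{#P_t}`. -/
theorem card_functions_eq_card_admissible_mul {G : Type*} [AddGroup G] [Fintype G]
    [DecidableEq G] (f : G → G) (S : Finset G) (k : ℕ)
    (hS : S.card = k) (hk : unif f ≤ k) :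
    {g : G → G | Finset.univ.image g = S ∧
        ∀ x y : G, x ≠ y → f x = f y → g x ≠ g y}.ncard =
      {A : Finset (G × G) | IsAdmissible f A S}.ncard *
        ∏ t ∈ Finset.Icc 1 (unif f), (Nat.factorial t) ^ (Pset f t).card :=
  card_functions_eq_card_admissible_mul_general f S
end

section
/- Let G be a finite group, f : G → G, and let g : G → G satisfy g(x) ≠ g(y) whenever x ≠ y and f(x) = f(y). Then the set of positions A := {(g(x) + f(x), f(x)) : x ∈ G} ⊆ G × Im(f) is an admissible subtable of M_f with value set Im(g), and range(A) = Im(g + f), where (g+f)(x) := g(x) + f(x). -/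
section FiberInjective

variable {α G : Type*}

theorem injective_add_prod_of_fiber_injective [AddRightCancelSemigroup G] {f g : α → G}
    (hg : ∀ x y : α, x ≠ y → f x = f y → g x ≠ g y) :
    Function.Injective fun x => (g x + f x, f x) := by
  intro x y hxy
  obtain ⟨hsum, hf⟩ := Prod.mk.inj hxy
  by_contra hne
  exact hg x y hne hf (add_right_cancel (hf ▸ hsum))

variable [Fintype α] [DecidableEq G]

theorem image_sub_snd_image_add_prod [AddGroup G] (f g : α → G) :
    (Finset.univ.image fun x => (g x + f x, f x)).image (fun p => p.1 - p.2) =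
      Finset.univ.image g := by
  simp only [Finset.image_image, Function.comp_def, add_sub_cancel_right]

end FiberInjective

theorem filter_snd_eq_image_prod {G : Type*} [Fintype G] [DecidableEq G] (f h : G → G)
    (c : G) :
    (Finset.univ.image fun x => (h x, f x)).filter (fun p => p.2 = c) =
      (preim f c).image fun x => (h x, f x) := by
  rw [preim, Finset.filter_image]

/-- If `g` is injective on each fiber of `f`, then
`A = {(g(x) + f(x), f(x)) : x ∈ G}` is an admissible subtable of `M_f` with value set
`Im(g)`, and `range(A) = Im(g + f)`. -/
theorem isAdmissible_of_fiber_injective {G : Type*} [AddGroup G] [Fintype G]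
    [DecidableEq G] (f g : G → G)
    (hg : ∀ x y : G, x ≠ y → f x = f y → g x ≠ g y) :
    IsAdmissible f (Finset.univ.image (fun x => (g x + f x, f x)))
        (Finset.univ.image g) ∧
      (Finset.univ.image (fun x => (g x + f x, f x))).image Prod.fst =
        Finset.univ.image (fun x => g x + f x) := by
  refine ⟨⟨?_, (image_sub_snd_image_add_prod f g).symm, fun c _ => ?_⟩, Finset.image_image⟩
  · simp only [Finset.forall_mem_image]
    exact fun x _ => Finset.mem_image_of_mem f (Finset.mem_univ x)
  · rw [filter_snd_eq_image_prod,
      Finset.card_image_of_injective _ (injective_add_prod_of_fiber_injective hg)]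
end

section
/- Let G be a finite group, f : G → G, and let A be an admissible subtable of M_f with value set S. Then #S ≥ u(f). -/
/-
Every column `c` of the table is mapped injectively to `S` by `(r, c) ↦ r - c`, and the column of
a value `b` of `f` has `#preim(f,b)` positions by (A2); values outside `Im(f)` have no preimages.
-/

theorem card_filter_snd_eq_le_card_image_sub {G : Type*} [AddGroup G] [DecidableEq G]
    (A : Finset (G × G)) (c : G) :
    (A.filter fun p => p.2 = c).card ≤ (A.image fun p => p.1 - p.2).card := by
  refine Finset.card_le_card_of_injOn (fun p => p.1 - p.2) (fun p hp => ?_)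
    fun p hp q hq hpq => ?_
  · exact Finset.mem_image_of_mem _ (Finset.mem_filter.1 hp).1
  · have hp2 : p.2 = c := (Finset.mem_filter.1 hp).2
    have hq2 : q.2 = c := (Finset.mem_filter.1 hq).2
    simp only [hp2, hq2, sub_left_inj] at hpq
    exact Prod.ext hpq (hp2.trans hq2.symm)

theorem mem_image_of_preim_nonempty {G : Type*} [Fintype G] [DecidableEq G] {f : G → G} {b : G}
    (hb : (preim f b).Nonempty) : b ∈ Finset.univ.image f := by
  obtain ⟨x, hx⟩ := hb
  exact Finset.mem_image.2 ⟨x, Finset.mem_univ x, (Finset.mem_filter.1 hx).2⟩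

/-- The value set of any admissible subtable of `M_f` has at least `u(f)` elements. -/
theorem unif_le_card_of_isAdmissible {G : Type*} [AddGroup G] [Fintype G]
    [DecidableEq G] (f : G → G) (A : Finset (G × G)) (S : Finset G)
    (hA : IsAdmissible f A S) :
    unif f ≤ S.card := by
  obtain ⟨-, rfl, hcol⟩ := hA
  refine Finset.sup_le fun b _ => ?_
  rcases (preim f b).eq_empty_or_nonempty with hb | hb
  · simp [hb]
  · rw [← hcol b (mem_image_of_preim_nonempty hb)]
    exact card_filter_snd_eq_le_card_image_sub A b
end

section
/- Let G be a finite group of order q, f : G → G with V(f) = v, and let k be an integer with 1 ≤ k ≤ q. If q · Σ_{i=0}^{k} (−1)^i · C(k,i) · C(v,i) / C(q,i) < 1, where the sum is computed in the rationals and C(n,m) denotes the binomial coefficient, then there exists a subset S ⊆ G with #S = k such that for every r ∈ G there exists c ∈ Im(f) with r − c ∈ S (i.e. S is a cover of G associated with f). -/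
/-!
The sum in the hypothesis equals `C(q-v, k) / C(q, k)`, the probability that a uniformly random
`k`-subset `S` of `G` misses a fixed `v`-element set. The element `r` fails to be of the form
`c + s` exactly when `S` misses the `v`-element set `r - Im(f)`, so by the union bound the
expected number of such `r` is `q · C(q-v, k) / C(q, k) < 1`, and some `S` leaves none.
-/

open Finset

theorem alternating_sum_choose_mul_choose_sub (v : ℕ) {n k : ℕ} (hv : v ≤ n) :
    ∑ i ∈ range (k + 1), (-1 : ℤ) ^ i * v.choose i * (n - i).choose (k - i) =
      (n - v).choose k := by
  induction v generalizing n k with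
  | zero =>
    rw [sum_range_succ', sum_eq_zero fun i _ ↦ by simp]
    simp
  | succ v ih =>
    cases k with
    | zero => simp
    | succ k =>
      -- Pascal's rule on `C(v+1, i+1)` splits the sum into those for `(v, n, k+1)` and `(v, n-1, k)`.
      have split_term : ∀ i ∈ range (k + 1),
          (-1 : ℤ) ^ (i + 1) * (v + 1).choose (i + 1) * (n - (i + 1)).choose (k + 1 - (i + 1)) =
            (-1 : ℤ) ^ (i + 1) * v.choose (i + 1) * (n - (i + 1)).choose (k - i) -
              (-1 : ℤ) ^ i * v.choose i * (n - 1 - i).choose (k - i) := by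
        intro i _
        rw [Nat.choose_succ_succ, show n - (i + 1) = n - 1 - i by omega,
          show k + 1 - (i + 1) = k - i by omega]
        push_cast
        ring
      have sum_v := ih (n := n) (k := k + 1) (by omega)
      have sum_pred := ih (n := n - 1) (k := k) (by omega)
      rw [sum_range_succ'] at sum_v ⊢
      rw [sum_congr rfl split_term, sum_sub_distrib, sum_pred]
      have pascal :
          (n - v).choose (k + 1) = (n - 1 - v).choose k + (n - (v + 1)).choose (k + 1) := by
        rw [show n - v = n - (v + 1) + 1 by omega, Nat.choose_succ_succ,
          show n - 1 - v = n - (v + 1) by omega]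
      simp only [pow_zero, Nat.choose_zero_right, Nat.cast_one, one_mul, Nat.sub_zero,
        Nat.add_sub_add_right, pascal, Nat.cast_add] at sum_v ⊢
      linarith

theorem sum_choose_mul_choose_div_choose {K : Type*} [Field K] [CharZero K]
    {n k v : ℕ} (hk : k ≤ n) (hv : v ≤ n) :
    ∑ i ∈ range (k + 1), (-1 : K) ^ i * k.choose i * v.choose i / n.choose i =
      (n - v).choose k / n.choose k := by
  have hnk : (n.choose k : K) ≠ 0 := by exact_mod_cast (Nat.choose_pos hk).ne'
  rw [eq_div_iff hnk, sum_mul]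
  have identity :=
    congrArg (Int.cast : ℤ → K) (alternating_sum_choose_mul_choose_sub v (k := k) hv)
  push_cast at identity
  rw [← identity]
  refine sum_congr rfl fun i hi ↦ ?_
  have hik : i ≤ k := Nat.lt_succ_iff.mp (mem_range.mp hi)
  have hni : (n.choose i : K) ≠ 0 := by exact_mod_cast (Nat.choose_pos (hik.trans hk)).ne'
  have hmul : (n.choose k * k.choose i : K) = n.choose i * (n - i).choose (k - i) := by
    exact_mod_cast Nat.choose_mul hik
  rw [div_mul_eq_mul_div, div_eq_iff hni]
  linear_combination (-1 : K) ^ i * v.choose i * hmul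

def IsCover {G : Type*} [AddGroup G] (C S : Finset G) : Prop :=
  ∀ r : G, ∃ c ∈ C, r - c ∈ S

theorem exists_isCover_of_card_mul_choose_lt {G : Type*} [AddGroup G] [Fintype G] [DecidableEq G]
    (C : Finset G) {k : ℕ}
    (h : Fintype.card G * (Fintype.card G - #C).choose k < (Fintype.card G).choose k) :
    ∃ S : Finset G, #S = k ∧ IsCover C S := by
  set uncovering : Finset (Finset G) :=
    univ.biUnion fun r ↦ ((C.image (r - ·))ᶜ).powersetCard k
  have hcard : #uncovering < #(univ.powersetCard k : Finset (Finset G)) :=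
    calc #uncovering ≤ ∑ r : G, #(((C.image (r - ·))ᶜ).powersetCard k) := card_biUnion_le
      _ = Fintype.card G * (Fintype.card G - #C).choose k := by
        simp [card_compl, card_image_of_injective _ sub_right_injective]
      _ < (Fintype.card G).choose k := h
      _ = #(univ.powersetCard k) := by simp
  obtain ⟨S, hS, hS_good⟩ := exists_mem_notMem_of_card_lt_card hcard
  have hSk : #S = k := (mem_powersetCard.mp hS).2
  refine ⟨S, hSk, fun r ↦ ?_⟩
  have hmeets : ¬ S ⊆ (C.image (r - ·))ᶜ := fun hsub ↦
    hS_good (mem_biUnion.mpr ⟨r, mem_univ r, mem_powersetCard.mpr ⟨hsub, hSk⟩⟩)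
  obtain ⟨x, hxS, hx⟩ := not_subset.mp hmeets
  obtain ⟨c, hc, rfl⟩ := mem_image.mp (not_not.mp (mem_compl.not.mp hx))
  exact ⟨c, hc, hxS⟩

theorem exists_cover_of_expectation_general {G : Type*} [AddGroup G] [Fintype G] [DecidableEq G]
    (f : G → G) (k : ℕ) (hkq : k ≤ Fintype.card G)
    (h : (Fintype.card G : ℚ) *
        ∑ i ∈ Finset.range (k + 1),
          (-1 : ℚ) ^ i * (k.choose i) * ((imCard f).choose i) /
            ((Fintype.card G).choose i) < 1) :
    ∃ S : Finset G, S.card = k ∧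
      ∀ r : G, ∃ c ∈ Finset.univ.image f, r - c ∈ S := by
  have hchoose : (0 : ℚ) < (Fintype.card G).choose k := by exact_mod_cast Nat.choose_pos hkq
  have hv : imCard f ≤ Fintype.card G := card_le_univ _
  rw [sum_choose_mul_choose_div_choose hkq hv, ← mul_div_assoc, div_lt_one hchoose] at h
  exact exists_isCover_of_card_mul_choose_lt _ (by exact_mod_cast h)

/-- If `q·Σ_{i=0}^{k} (−1)^i C(k,i)C(v,i)/C(q,i) < 1` (computed in `ℚ`), where
`q = #G` and `v = V(f)`, then there is a `k`-subset `S` of `G` which is a cover of `G`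
associated with `f`, i.e. every `r ∈ G` satisfies `r - c ∈ S` for some `c ∈ Im(f)`. -/
theorem exists_cover_of_expectation {G : Type*} [AddGroup G] [Fintype G] [DecidableEq G]
    (f : G → G) (k : ℕ) (hk1 : 1 ≤ k) (hkq : k ≤ Fintype.card G)
    (h : (Fintype.card G : ℚ) *
        ∑ i ∈ Finset.range (k + 1),
          (-1 : ℚ) ^ i * (k.choose i) * ((imCard f).choose i) /
            ((Fintype.card G).choose i) < 1) :
    ∃ S : Finset G, S.card = k ∧
      ∀ r : G, ∃ c ∈ Finset.univ.image f, r - c ∈ S :=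
  exists_cover_of_expectation_general f k hkq h
end

section
/- Let G be a finite group of order q, f : G → G with V(f) = v, and let k be an integer with 1 ≤ k ≤ q. Then, as an identity of rational numbers, Σ_{S} #{r ∈ G : there exist c ∈ Im(f) and s ∈ S with r − c = s} = C(q,k) · q · Σ_{i=1}^{k} (−1)^{i−1} · C(k,i) · C(v,i) / C(q,i), where the outer sum on the left ranges over all k-element subsets S of G and C(n,m) denotes the binomial coefficient. -/
/-!
Double counting over pairs `(S, r)`: for each `r` the row `{r - c | c ∈ Im f}` has `v` elements,
because `c ↦ r - c` is injective, so it meets `C(q,k) - C(q-v,k)` of the `k`-subsets `S`. The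
left-hand side is therefore `q (C(q,k) - C(q-v,k))`, and inclusion–exclusion writes `C(q-v,k)` as
`Σᵢ (-1)ⁱ C(v,i) C(q-i,k-i)`, where `C(q-i,k-i) = C(q,k) C(k,i) / C(q,i)`.
-/

open Finset

namespace Nat

theorem choose_eq_sum_neg_one_pow_mul_choose_mul_choose (n v k : ℕ) :
    (n.choose k : ℤ) =
      ∑ i ∈ range (k + 1), (-1 : ℤ) ^ i * v.choose i * (n + v - i).choose (k - i) := by
  induction v generalizing n k with
  | zero =>
    rw [sum_range_succ']
    simp
  | succ v ih =>
    cases k with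
    | zero => simp
    | succ m =>
      -- Pascal's rule on `C(v+1, j+1)` leaves the instances `(n, m)` and `(n+1, m+1)` of `ih`.
      have ih_succ := ih (n + 1) (m + 1)
      rw [sum_range_succ', add_right_comm n 1 v] at ih_succ
      rw [sum_range_succ', ← add_assoc]
      simp only [Nat.add_sub_add_right, pow_zero, choose_zero_right, Nat.cast_one, one_mul,
        Nat.sub_zero] at ih_succ ⊢
      have pascal (j : ℕ) : (-1 : ℤ) ^ (j + 1) * ((v + 1).choose (j + 1) : ℤ) *
            (n + v - j).choose (m - j) =
          -((-1) ^ j * v.choose j * (n + v - j).choose (m - j)) +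
            (-1) ^ (j + 1) * v.choose (j + 1) * (n + v - j).choose (m - j) := by
        rw [choose_succ_succ']
        push_cast
        ring
      rw [sum_congr rfl fun j _ => pascal j, sum_add_distrib, sum_neg_distrib, ← ih n m]
      rw [choose_succ_succ' n m] at ih_succ
      push_cast at ih_succ
      linarith

theorem cast_choose_mul_choose_div_choose {K : Type*} [Field K] [CharZero K] {n k i : ℕ}
    (hik : i ≤ k) (hin : i ≤ n) :
    (n.choose k : K) * k.choose i / n.choose i = (n - i).choose (k - i) := by
  have hpos : (n.choose i : K) ≠ 0 := by exact_mod_cast (Nat.choose_pos hin).ne'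
  rw [div_eq_iff hpos, mul_comm ((n - i).choose (k - i) : K)]
  exact_mod_cast Nat.choose_mul hik

theorem cast_choose_sub_choose_sub_eq_mul_sum {K : Type*} [Field K] [CharZero K] {q v : ℕ}
    (hv : v ≤ q) (k : ℕ) :
    (q.choose k : K) - (q - v).choose k =
      q.choose k * ∑ i ∈ Icc 1 k, (-1 : K) ^ (i - 1) * k.choose i * v.choose i / q.choose i := by
  have term (i : ℕ) (hi : i ∈ Icc 1 k) :
      (q.choose k : K) * ((-1 : K) ^ (i - 1) * k.choose i * v.choose i / q.choose i) =
        -((-1 : K) ^ i * v.choose i * (q - i).choose (k - i)) := by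
    obtain ⟨hi1, hik⟩ := mem_Icc.1 hi
    have hsign : (-1 : K) ^ i = -(-1) ^ (i - 1) := by
      conv_lhs => rw [← Nat.sub_add_cancel hi1, pow_succ, mul_neg_one]
    rcases le_or_gt i q with hiq | hqi
    · rw [← cast_choose_mul_choose_div_choose hik hiq, hsign]
      ring
    · simp [Nat.choose_eq_zero_of_lt (hv.trans_lt hqi)]
  have alt : ((q - v).choose k : K) =
      q.choose k + ∑ i ∈ Icc 1 k, (-1 : K) ^ i * v.choose i * (q - i).choose (k - i) := by
    have h := choose_eq_sum_neg_one_pow_mul_choose_mul_choose (q - v) v k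
    rw [Nat.sub_add_cancel hv, range_eq_Ico, sum_eq_sum_Ico_succ_bot (by omega : 0 < k + 1),
      zero_add, Ico_add_one_right_eq_Icc] at h
    simpa using congrArg (Int.cast : ℤ → K) h
  rw [mul_sum, sum_congr rfl term, sum_neg_distrib, alt]
  ring

end Nat

theorem Finset.card_filter_not_disjoint_powersetCard_add {α : Type*} [Fintype α] [DecidableEq α]
    (A : Finset α) (k : ℕ) :
    #{S ∈ powersetCard k univ | ¬Disjoint S A} + (Fintype.card α - #A).choose k =
      (Fintype.card α).choose k := by
  have hdisj : {S ∈ powersetCard k (univ : Finset α) | Disjoint S A} = powersetCard k Aᶜ := by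
    ext S
    simp [mem_powersetCard, subset_compl_iff_disjoint_right, and_comm]
  rw [← card_compl, ← card_powersetCard, ← hdisj, add_comm, card_filter_add_card_filter_not,
    card_powersetCard, card_univ]

theorem exists_sub_eq_mem_iff_not_disjoint_image {G : Type*} [AddGroup G] [DecidableEq G]
    (A S : Finset G) (r : G) :
    (∃ c ∈ A, ∃ s ∈ S, r - c = s) ↔ ¬Disjoint S (A.image (r - ·)) := by
  simp only [not_disjoint_iff, mem_image]
  constructor
  · rintro ⟨c, hc, s, hs, rfl⟩
    exact ⟨_, hs, c, hc, rfl⟩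
  · rintro ⟨s, hs, c, hc, rfl⟩
    exact ⟨c, hc, _, hs, rfl⟩

theorem card_filter_meets_sub_row_add {G : Type*} [AddGroup G] [Fintype G] [DecidableEq G]
    (A : Finset G) (k : ℕ) (r : G) :
    #{S ∈ powersetCard k univ | ∃ c ∈ A, ∃ s ∈ S, r - c = s} + (Fintype.card G - #A).choose k =
      (Fintype.card G).choose k := by
  simp only [exists_sub_eq_mem_iff_not_disjoint_image]
  rw [← card_image_of_injective A (sub_right_injective (b := r))]
  exact card_filter_not_disjoint_powersetCard_add _ k

theorem sum_card_rows_meeting_general {G : Type*} [AddGroup G] [Fintype G] [DecidableEq G]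
    (f : G → G) (k : ℕ) :
    (∑ S ∈ Finset.powersetCard k (Finset.univ : Finset G),
        ((Finset.univ.filter
          (fun r : G => ∃ c ∈ Finset.univ.image f, ∃ s ∈ S, r - c = s)).card : ℚ)) =
      ((Fintype.card G).choose k : ℚ) * (Fintype.card G) *
        ∑ i ∈ Finset.Icc 1 k,
          (-1 : ℚ) ^ (i - 1) * (k.choose i) * ((imCard f).choose i) /
            ((Fintype.card G).choose i) := by
  have hv : imCard f ≤ Fintype.card G := card_le_univ _
  have hrow (r : G) :
      (#{S ∈ powersetCard k univ | ∃ c ∈ univ.image f, ∃ s ∈ S, r - c = s} : ℚ) =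
        (Fintype.card G).choose k - (Fintype.card G - imCard f).choose k := by
    rw [eq_sub_iff_add_eq]
    exact_mod_cast card_filter_meets_sub_row_add _ k r
  have hswap : ∑ S ∈ powersetCard k univ, #{r | ∃ c ∈ univ.image f, ∃ s ∈ S, r - c = s} =
      ∑ r, #{S ∈ powersetCard k univ | ∃ c ∈ univ.image f, ∃ s ∈ S, r - c = s} := by
    simp only [card_filter]
    rw [Finset.sum_comm]
    -- the two sides carry different (but equal) `Decidable` instances for the membership test
    congr!
  rw [← Nat.cast_sum, hswap, Nat.cast_sum]
  simp only [hrow, sum_const, card_univ, nsmul_eq_mul,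
    Nat.cast_choose_sub_choose_sub_eq_mul_sum hv]
  ring

/-- Summing, over all `k`-subsets `S` of `G`, the number of rows `r` of the subtraction
table of `f` meeting `S`, gives `C(q,k) · q · Σ_{i=1}^{k} (−1)^{i−1} C(k,i)C(v,i)/C(q,i)`
as rational numbers, where `q = #G` and `v = V(f)`. -/
theorem sum_card_rows_meeting {G : Type*} [AddGroup G] [Fintype G] [DecidableEq G]
    (f : G → G) (k : ℕ) (hk1 : 1 ≤ k) (hkq : k ≤ Fintype.card G) :
    (∑ S ∈ Finset.powersetCard k (Finset.univ : Finset G),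
        ((Finset.univ.filter
          (fun r : G => ∃ c ∈ Finset.univ.image f, ∃ s ∈ S, r - c = s)).card : ℚ)) =
      ((Fintype.card G).choose k : ℚ) * (Fintype.card G) *
        ∑ i ∈ Finset.Icc 1 k,
          (-1 : ℚ) ^ (i - 1) * (k.choose i) * ((imCard f).choose i) /
            ((Fintype.card G).choose i) :=
  sum_card_rows_meeting_general f k
end

section
/- Let q ≥ 2 be an even integer and define the integer sequence (n_k) by n_0 = q/2 and n_k = n_{k−1} − ⌈n_{k−1}²/q⌉ for k ≥ 1 (so n_k remains a nonnegative integer; once n_k = 0 the sequence stays 0). Then for every integer k ≥ 1, (k + 2) · n_k < q, i.e. n_k < q/(k+2). -/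
/-!
Let `f = ceilSqStep q`, so `f(m) = m - ⌈m²/q⌉`. Since `⌈m²/q⌉ ≥ m²/q`, we get `q f(m) ≤ m (q - m)`, and when `a m ≤ q`
with `a ≥ 1` the identity `q² - (a + 1) m (q - m) - m² = (q - a m)(q - m) ≥ 0` gives
`(a + 1) f(m) < q`. Starting from `2 n₀ ≤ q`, induction on `k` yields `(k + 2) n_k ≤ q`, and one
more step makes the inequality strict.
-/

def ceilSqStep (q m : ℕ) : ℕ := m - ⌈((m : ℚ) ^ 2) / (q : ℚ)⌉₊

lemma mul_ceilSqStep_le {q : ℕ} (hq : 0 < q) (m : ℕ) : q * ceilSqStep q m ≤ m * (q - m) := by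
  set c := ⌈((m : ℚ) ^ 2) / (q : ℚ)⌉₊
  have hsq : m * m ≤ q * c := by
    have hc : ((m : ℚ) ^ 2) / q ≤ c := Nat.le_ceil _
    rw [div_le_iff₀ (by exact_mod_cast hq)] at hc
    exact_mod_cast (by linarith : (m : ℚ) * m ≤ q * c)
  calc q * ceilSqStep q m = q * m - q * c := Nat.mul_sub q m c
    _ ≤ m * q - m * m := by rw [mul_comm q m]; exact Nat.sub_le_sub_left hsq _
    _ = m * (q - m) := (Nat.mul_sub m q m).symm

lemma succ_mul_mul_sub_add_sq_le {q m a : ℕ} (ha : 1 ≤ a) (h : a * m ≤ q) :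
    (a + 1) * (m * (q - m)) + m ^ 2 ≤ q ^ 2 := by
  have hmq : m ≤ q := (Nat.le_mul_of_pos_left m ha).trans h
  zify [hmq] at h ⊢
  nlinarith [mul_nonneg (sub_nonneg.mpr h) (sub_nonneg.mpr (show (m : ℤ) ≤ q by exact_mod_cast hmq))]

lemma succ_mul_ceilSqStep_lt {q m a : ℕ} (hq : 0 < q) (ha : 1 ≤ a) (h : a * m ≤ q) :
    (a + 1) * ceilSqStep q m < q := by
  rcases Nat.eq_zero_or_pos m with rfl | hm
  · simpa [ceilSqStep] using hq
  refine Nat.lt_of_mul_lt_mul_left (a := q) ?_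
  calc q * ((a + 1) * ceilSqStep q m) = (a + 1) * (q * ceilSqStep q m) := by ring
    _ ≤ (a + 1) * (m * (q - m)) := Nat.mul_le_mul_left _ (mul_ceilSqStep_le hq m)
    _ < q ^ 2 := by have := succ_mul_mul_sub_add_sq_le ha h; have := pow_pos hm 2; omega
    _ = q * q := sq q

theorem seq_lt_of_even_general (q : ℕ) (hq : 2 ≤ q)
    (n : ℕ → ℕ) (h0 : n 0 = q / 2)
    (hrec : ∀ k : ℕ, n (k + 1) = n k - ⌈((n k : ℚ) ^ 2) / (q : ℚ)⌉₊) :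
    ∀ k : ℕ, 1 ≤ k → (k + 2) * n k < q := by
  have hq0 : 0 < q := by omega
  have hstep (k : ℕ) (hk : (k + 2) * n k ≤ q) : (k + 3) * n (k + 1) < q := by
    rw [hrec k]
    exact succ_mul_ceilSqStep_lt hq0 (by omega) hk
  have hle (k : ℕ) : (k + 2) * n k ≤ q := by
    induction k with
    | zero => rw [h0]; omega
    | succ k ih => exact (hstep k ih).le
  rintro (_ | k) hk
  · omega
  · exact hstep k (hle k)

/-- For even `q ≥ 2` and the sequence `n₀ = q/2`, `n_k = n_{k−1} − ⌈n_{k−1}²/q⌉`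
(truncated natural subtraction), one has `n_k < q/(k+2)` for all `k ≥ 1`. -/
theorem seq_lt_of_even (q : ℕ) (hq : 2 ≤ q) (he : Even q)
    (n : ℕ → ℕ) (h0 : n 0 = q / 2)
    (hrec : ∀ k : ℕ, n (k + 1) = n k - ⌈((n k : ℚ) ^ 2) / (q : ℚ)⌉₊) :
    ∀ k : ℕ, 1 ≤ k → (k + 2) * n k < q :=
  seq_lt_of_even_general q hq n h0 hrec
end

section
/- Let q ≥ 3 be an odd integer, set m = q − 1, and define the integer sequence (n_k) by n_0 = m/2 and n_k = n_{k−1} − ⌈n_{k−1}²/m⌉ for k ≥ 1 (so n_k remains a nonnegative integer; once n_k = 0 the sequence stays 0). Then for every integer k ≥ 1, (k + 2) · n_k < m, i.e. n_k < (q−1)/(k+2). -/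
/-!
With `m = q - 1`, the invariant `(k + 2) n_k ≤ m` holds at `k = 0` and propagates, in the
stronger form `(k + 3) n_{k+1} < m`. Rounding the subtracted term up only makes `n_{k+1}`
smaller, so it suffices to bound the rational step `x ↦ x - x²/m`, and there
`m² - (k + 3)(x m - x²) = (m - (k + 2) x)(m - x) + x²`, which is positive.
-/

theorem add_three_mul_sub_sq_div_lt {K : Type*} [Field K] [LinearOrder K] [IsStrictOrderedRing K]
    {m x t : K} (hm : 0 < m) (hx : 0 ≤ x) (ht : 0 ≤ t) (h : (t + 2) * x ≤ m) :
    (t + 3) * (x - x ^ 2 / m) < m := by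
  have hxm : x ≤ m := by nlinarith
  have hpos : 0 < (m - (t + 2) * x) * (m - x) + x ^ 2 := by
    rcases hx.eq_or_lt with rfl | hx
    · simpa using hm.ne'
    · nlinarith [mul_nonneg (sub_nonneg.2 h) (sub_nonneg.2 hxm), pow_pos hx 2]
  have hdiv : x - x ^ 2 / m = (x * m - x ^ 2) / m := by field_simp
  rw [hdiv, ← mul_div_assoc, div_lt_iff₀ hm]
  linarith

theorem add_three_mul_sub_ceil_sq_div_lt {m k x : ℕ} (hm : 0 < m) (h : (k + 2) * x ≤ m) :
    (k + 3) * (x - ⌈(x : ℚ) ^ 2 / m⌉₊) < m := by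
  set c := ⌈(x : ℚ) ^ 2 / m⌉₊
  rcases lt_or_ge x c with hxc | hcx
  · simpa [Nat.sub_eq_zero_of_le hxc.le] using hm
  have hq : ((k : ℚ) + 3) * (x - x ^ 2 / m) < m :=
    add_three_mul_sub_sq_div_lt (by exact_mod_cast hm) (Nat.cast_nonneg x) (Nat.cast_nonneg k)
      (by exact_mod_cast h)
  have hc : (x : ℚ) ^ 2 / m ≤ c := Nat.le_ceil _
  have : (((k + 3) * (x - c) : ℕ) : ℚ) < m := by
    push_cast [hcx]
    calc ((k : ℚ) + 3) * (x - c) ≤ (k + 3) * (x - x ^ 2 / m) := by gcongr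
      _ < m := hq
  exact_mod_cast this

theorem seq_lt_of_odd_general (q : ℕ) (hq : 3 ≤ q)
    (n : ℕ → ℕ) (h0 : n 0 = (q - 1) / 2)
    (hrec : ∀ k : ℕ, n (k + 1) = n k - ⌈((n k : ℚ) ^ 2) / ((q - 1 : ℕ) : ℚ)⌉₊) :
    ∀ k : ℕ, 1 ≤ k → (k + 2) * n k < q - 1 := by
  have hm : 0 < q - 1 := by omega
  have hstep (k : ℕ) (hk : (k + 2) * n k ≤ q - 1) : (k + 3) * n (k + 1) < q - 1 := by
    rw [hrec k]
    exact add_three_mul_sub_ceil_sq_div_lt hm hk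
  have hinv : ∀ k, (k + 2) * n k ≤ q - 1 := by
    intro k
    induction k with
    | zero => omega
    | succ k ih => exact (hstep k ih).le
  rintro (_ | k) hk
  · omega
  · exact hstep k (hinv k)

/-- For odd `q ≥ 3`, `m = q − 1`, and the sequence `n₀ = m/2`,
`n_k = n_{k−1} − ⌈n_{k−1}²/m⌉` (truncated natural subtraction), one has
`n_k < m/(k+2)` for all `k ≥ 1`. -/
theorem seq_lt_of_odd (q : ℕ) (hq : 3 ≤ q) (ho : Odd q)
    (n : ℕ → ℕ) (h0 : n 0 = (q - 1) / 2)
    (hrec : ∀ k : ℕ, n (k + 1) = n k - ⌈((n k : ℚ) ^ 2) / ((q - 1 : ℕ) : ℚ)⌉₊) :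
    ∀ k : ℕ, 1 ≤ k → (k + 2) * n k < q - 1 :=
  seq_lt_of_odd_general q hq n h0 hrec
end

section
/- Let G be a finite group of even order q and let f : G → G be two-to-one. Define the integer sequence (n_k) by n_0 = q/2 and n_k = n_{k−1} − ⌈n_{k−1}²/q⌉ for k ≥ 1. Then for every integer k ≥ 1, pres(f) ≤ 1 + k + n_k. -/
open Finset Function
open Set (InjOn MapsTo EqOn)

theorem Finset.injOn_piecewise_union {α β : Type*} [DecidableEq α] {s₁ s₂ : Finset α}
    {t₁ t₂ : Set β} {f₁ f₂ : α → β} (hs : Disjoint s₁ s₂) (ht : Disjoint t₁ t₂)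
    (h₁ : InjOn f₁ s₁) (h₂ : InjOn f₂ s₂) (m₁ : MapsTo f₁ s₁ t₁) (m₂ : MapsTo f₂ s₂ t₂) :
    InjOn (s₁.piecewise f₁ f₂) ↑(s₁ ∪ s₂) := by
  have e₁ : EqOn (s₁.piecewise f₁ f₂) f₁ s₁ := fun x hx => piecewise_eq_of_mem _ _ _ hx
  have e₂ : EqOn (s₁.piecewise f₁ f₂) f₂ s₂ := fun x hx =>
    piecewise_eq_of_notMem _ _ _ (disjoint_right.1 hs hx)
  rw [coe_union, Set.injOn_union (disjoint_coe.2 hs)]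
  refine ⟨(e₁.injOn_iff).2 h₁, (e₂.injOn_iff).2 h₂, fun x hx y hy hxy => ?_⟩
  rw [e₁ hx, e₂ hy] at hxy
  exact Set.disjoint_left.1 ht (m₁ hx) (hxy ▸ m₂ hy)

theorem Finset.mapsTo_piecewise_union {α β : Type*} [DecidableEq α] {s₁ s₂ : Finset α}
    {t₁ t₂ : Set β} {f₁ f₂ : α → β} (m₁ : MapsTo f₁ s₁ t₁) (m₂ : MapsTo f₂ s₂ t₂) :
    MapsTo (s₁.piecewise f₁ f₂) ↑(s₁ ∪ s₂) (t₁ ∪ t₂) := by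
  intro x hx
  by_cases h : x ∈ s₁
  · rw [piecewise_eq_of_mem _ _ _ h]; exact Or.inl (m₁ h)
  · rw [piecewise_eq_of_notMem _ _ _ h]
    exact Or.inr (m₂ ((mem_union.1 hx).resolve_left h))

theorem Finset.exists_injOn_mapsTo_of_card_le {α β : Type*} [Nonempty β] {s : Finset α}
    {t : Finset β} (h : #s ≤ #t) : ∃ f : α → β, InjOn f s ∧ MapsTo f s t := by
  obtain ⟨f, hf, hinj⟩ :=
    s.finite_toSet.exists_injOn_of_encard_le (t := (t : Set β)) (by simpa using h)
  exact ⟨f, hinj, hf⟩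

section TwoToOne

variable {α : Type*} [Fintype α] [DecidableEq α] {f : α → α}

theorem two_mul_card_image_of_two_to_one (h2 : ∀ b ∈ univ.image f, #(preim f b) = 2) :
    2 * #(univ.image f) = Fintype.card α := by
  have h2' : ∀ b ∈ univ.image f, #{a | f a = b} = 2 := h2
  rw [← card_univ, card_eq_sum_card_image f univ, sum_congr rfl h2', sum_const, smul_eq_mul,
    mul_comm]

theorem exists_bijective_of_two_to_one [Nonempty α]
    (h2 : ∀ b ∈ univ.image f, #(preim f b) = 2) {t : α → α} (hinj : InjOn t (univ.image f))
    (hmaps : MapsTo t (univ.image f) ↑(univ.image f)ᶜ) :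
    ∃ σ : α → α, Bijective σ ∧ ∀ x, σ x = f x ∨ σ x = t (f x) := by
  set p := invFun f
  have hp : ∀ x, f (p (f x)) = f x := fun x => invFun_eq ⟨x, rfl⟩
  have hfI : ∀ x, f x ∈ univ.image f := fun x => mem_image_of_mem f (mem_univ x)
  refine ⟨fun x => if x = p (f x) then f x else t (f x), Finite.injective_iff_bijective.1 ?_,
    fun x => by dsimp only; split_ifs <;> simp⟩
  intro x y hxy
  simp only at hxy
  split_ifs at hxy with hx hy hy
  · rw [hx, hy, hxy]
  · exact absurd (hxy ▸ hmaps (hfI y)) (by simp)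
  · exact absurd (hxy ▸ hmaps (hfI x)) (by simp)
  · have hfxy : f x = f y := hinj (hfI x) (hfI y) hxy
    by_contra hne
    have : 2 < #(preim f (f x)) := two_lt_card.2
      ⟨x, by simp [preim], y, by simp [preim, hfxy], p (f x), by simp [preim, hp], hne, hx,
        fun h => hy (by rw [← hfxy, h])⟩
    exact this.ne' (h2 _ (hfI x))

end TwoToOne

section AddGroup

variable {G : Type*} [AddGroup G] [Fintype G] [DecidableEq G]

theorem pres_le_imCard_sub {f σ : G → G} (hσ : Bijective σ) :
    pres f ≤ imCard (fun x => σ x - f x) :=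
  Nat.sInf_le ⟨_, by simpa using hσ, rfl⟩

def greedyStep (q m : ℕ) : ℕ := m - ⌈(m : ℚ) ^ 2 / q⌉₊

theorem exists_ceil_le_card_filter_add_mem (B T : Finset G) :
    ∃ c : G, ⌈(#B * #T : ℚ) / Fintype.card G⌉₊ ≤ #{b ∈ B | c + b ∈ T} := by
  have hq : (Fintype.card G : ℚ) ≠ 0 := by positivity
  obtain ⟨c, -, hc⟩ := exists_le_card_fiber_of_nsmul_le_card_of_maps_to
    (s := B ×ˢ T) (f := fun p => p.2 - p.1) (fun _ _ => mem_univ _) univ_nonempty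
    (b := (#B * #T : ℚ) / Fintype.card G) (by simp [card_product, mul_div_cancel₀ _ hq])
  have hfiber : #{p ∈ B ×ˢ T | p.2 - p.1 = c} = #{b ∈ B | c + b ∈ T} := by
    rw [← card_image_of_injective _ (f := fun b => (b, c + b)) fun _ _ h => congrArg Prod.fst h]
    congr 1
    ext ⟨b, d⟩
    simp only [mem_filter, mem_product, sub_eq_iff_eq_add, mem_image, Prod.mk.injEq]
    grind
  exact ⟨c, Nat.ceil_le.2 (hfiber ▸ hc)⟩

theorem exists_injOn_mapsTo_card_image_sub_le (k : ℕ) {B T : Finset G} (hBT : #B ≤ #T) :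
    ∃ t : G → G, InjOn t B ∧ MapsTo t B T ∧
      #(B.image fun b => t b - b) ≤ k + (greedyStep (Fintype.card G))^[k] #B := by
  induction k generalizing B T with
  | zero =>
    obtain ⟨t, hinj, hmaps⟩ := exists_injOn_mapsTo_of_card_le hBT
    exact ⟨t, hinj, hmaps, by simpa using card_image_le⟩
  | succ k ih =>
    obtain ⟨c, hc⟩ := exists_ceil_le_card_filter_add_mem B T
    have hr : ⌈(#B : ℚ) ^ 2 / Fintype.card G⌉₊ ≤ #{b ∈ B | c + b ∈ T} :=
      le_trans (Nat.ceil_mono (by rw [sq]; gcongr)) hc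
    obtain ⟨B₁, hB₁, hB₁card⟩ := exists_subset_card_eq hr
    set T₁ := B₁.image (c + ·)
    have hB₁B : B₁ ⊆ B := hB₁.trans (filter_subset _ _)
    have hT₁T : T₁ ⊆ T := by
      simp only [T₁, image_subset_iff]
      exact fun b hb => (mem_filter.1 (hB₁ hb)).2
    have hT₁card : #T₁ = #B₁ := card_image_of_injective _ (add_right_injective c)
    obtain ⟨t, hinj, hmaps, hcard⟩ := ih (B := B \ B₁) (T := T \ T₁) (by
      rw [card_sdiff_of_subset hB₁B, card_sdiff_of_subset hT₁T]; omega)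
    have hmaps₁ : MapsTo (c + ·) B₁ T₁ := fun b hb => mem_image_of_mem _ hb
    refine ⟨B₁.piecewise (c + ·) t, ?_, ?_, ?_⟩
    · have := injOn_piecewise_union disjoint_sdiff (disjoint_coe.2 disjoint_sdiff)
        (add_right_injective c).injOn hinj hmaps₁ hmaps
      rwa [union_sdiff_of_subset hB₁B] at this
    · have := mapsTo_piecewise_union hmaps₁ hmaps
      rw [union_sdiff_of_subset hB₁B, ← coe_union, union_sdiff_of_subset hT₁T] at this
      exact this
    · have hsub : B.image (fun b => B₁.piecewise (c + ·) t b - b) ⊆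
          insert c ((B \ B₁).image fun b => t b - b) := by
        intro d hd
        obtain ⟨b, hb, rfl⟩ := mem_image.1 hd
        by_cases hb₁ : b ∈ B₁
        · simp [piecewise_eq_of_mem _ _ _ hb₁]
        · rw [piecewise_eq_of_notMem _ _ _ hb₁]
          exact mem_insert_of_mem (mem_image_of_mem _ (mem_sdiff.2 ⟨hb, hb₁⟩))
      calc _ ≤ _ := card_le_card hsub
        _ ≤ k + 1 + (greedyStep (Fintype.card G))^[k + 1] #B := by
          rw [card_sdiff_of_subset hB₁B] at hcard
          rw [iterate_succ_apply, greedyStep, ← hB₁card]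
          exact (card_insert_le _ _).trans (by omega)

end AddGroup

theorem pres_le_seq_of_even_two_to_one_general {G : Type*} [AddGroup G] [Fintype G]
    [DecidableEq G] (f : G → G)
    (h2 : ∀ b ∈ Finset.univ.image f, (preim f b).card = 2)
    (n : ℕ → ℕ) (h0 : n 0 = Fintype.card G / 2)
    (hrec : ∀ k : ℕ, n (k + 1) = n k - ⌈((n k : ℚ) ^ 2) / (Fintype.card G : ℚ)⌉₊) :
    ∀ k : ℕ, 1 ≤ k → pres f ≤ 1 + k + n k := by
  intro k _
  set I := univ.image f
  have hI : 2 * #I = Fintype.card G := two_mul_card_image_of_two_to_one h2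
  have hn : ∀ j, n j = (greedyStep (Fintype.card G))^[j] #I := by
    intro j
    induction j with
    | zero => rw [h0, iterate_zero_apply]; omega
    | succ j ih => rw [hrec, ih, iterate_succ_apply']; rfl
  obtain ⟨t, hinj, hmaps, hcard⟩ :=
    exists_injOn_mapsTo_card_image_sub_le k (B := I) (T := Iᶜ) (by rw [card_compl]; omega)
  obtain ⟨σ, hσ, hσf⟩ := exists_bijective_of_two_to_one h2 hinj hmaps
  have hsub : univ.image (fun x => σ x - f x) ⊆ insert 0 (I.image fun b => t b - b) := by
    intro d hd
    obtain ⟨x, -, rfl⟩ := mem_image.1 hd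
    rcases hσf x with h | h <;> rw [h]
    · simp
    · exact mem_insert_of_mem (mem_image_of_mem _ (mem_image_of_mem f (mem_univ x)))
  calc pres f ≤ imCard (fun x => σ x - f x) := pres_le_imCard_sub hσ
    _ ≤ #(insert 0 (I.image fun b => t b - b)) := card_le_card hsub
    _ ≤ 1 + k + n k := (card_insert_le _ _).trans (by rw [hn]; omega)

/-- If `#G = q` is even, `f : G → G` is two-to-one, and `n₀ = q/2`,
`n_k = n_{k−1} − ⌈n_{k−1}²/q⌉`, then `pres(f) ≤ 1 + k + n_k` for every `k ≥ 1`. -/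
theorem pres_le_seq_of_even_two_to_one {G : Type*} [AddGroup G] [Fintype G]
    [DecidableEq G] (f : G → G) (he : Even (Fintype.card G))
    (h2 : ∀ b ∈ Finset.univ.image f, (preim f b).card = 2)
    (n : ℕ → ℕ) (h0 : n 0 = Fintype.card G / 2)
    (hrec : ∀ k : ℕ, n (k + 1) = n k - ⌈((n k : ℚ) ^ 2) / (Fintype.card G : ℚ)⌉₊) :
    ∀ k : ℕ, 1 ≤ k → pres f ≤ 1 + k + n k :=
  pres_le_seq_of_even_two_to_one_general f h2 n h0 hrec
end
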